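/- arXiv:2504.16938 — 4 statements merged into one kernel-verified Lean document; each statement's English description precedes it below -/
import Mathlib

section
/- If ≺ is a modular strict partial order on a finite set G, then for any subsets P, Q ⊆ G, if g ∈ min(P) ∩ Q for some g, then min(P ∩ Q) ⊆ min(P); in particular, any h ∈ min(P ∩ Q) satisfies h ∈ min(P) whenever min(P) ∩ Q ≠ ∅. -/
def mins {α : Type*} (r : α → α → Prop) (B : Set α) : Set α :=
  {g ∈ B | ¬ ∃ h ∈ B, r h g}

/-- Key step for Rational Monotonicity: for a modular strict partial order, if some
`≺`-minimal element of `P` lies in `Q`, then `min(P ∩ Q) ⊆ min(P)`. -/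
theorem minInter_subset_min {G : Type*} [Finite G] (r : G → G → Prop)
    (hirr : ∀ a, ¬ r a a) (htrans : ∀ a b c, r a b → r b c → r a c)
    (hmod : ∀ g0 g1 g2 : G, ¬ r g0 g1 → ¬ r g1 g0 → r g2 g0 → r g2 g1)
    (P Q : Set G) (g : G) (hg : g ∈ mins r P ∩ Q) :
    mins r (P ∩ Q) ⊆ mins r P := by
  obtain ⟨⟨hgP, hgmin⟩, hgQ⟩ := hg
  rintro h ⟨⟨hhP, hhQ⟩, hhmin⟩
  refine ⟨hhP, ?_⟩
  rintro ⟨k, hkP, hkh⟩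
  by_cases hgh : r g h
  · exact hhmin ⟨g, ⟨hgP, hgQ⟩, hgh⟩
  by_cases hhg : r h g
  · exact hgmin ⟨k, hkP, htrans _ _ _ hkh hhg⟩
  · exact hgmin ⟨k, hkP, hmod h g k hhg hgh hkh⟩
end

section
/- In any ranked context (a preferential context whose order ≺ is modular), the induced consequence relation satisfies Rational Monotonicity: if φ |~ ψ and it is not the case that φ |~ ¬γ, then φ ∧ γ |~ ψ. Concretely: for subsets P, Q, R of a finite set G with modular strict partial order ≺, if min(P) ⊆ Q and min(P) ∩ R ≠ ∅, then min(P ∩ R) ⊆ Q. -/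
inductive CAttr (M : Type*) where
  | atom : M → CAttr M
  | neg  : CAttr M → CAttr M
  | and  : CAttr M → CAttr M → CAttr M
  | or   : CAttr M → CAttr M → CAttr M

def extent {G M : Type*} (I : G → M → Prop) : CAttr M → Set G
  | .atom m  => {g | I g m}
  | .neg φ   => (extent I φ)ᶜ
  | .and φ ψ => extent I φ ∩ extent I ψ
  | .or φ ψ  => extent I φ ∪ extent I ψ

/-- Satisfaction of a defeasible conditional `φ |~ ψ` by a preferential context. -/
def satD {G M : Type*} (I : G → M → Prop) (r : G → G → Prop) (φ ψ : CAttr M) : Prop :=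
  mins r (extent I φ) ⊆ extent I ψ

/-- (RM): in a ranked context (modular preference), if `φ |~ ψ` and not `φ |~ ¬γ`,
then `φ ∧ γ |~ ψ`. -/
theorem satD_rm {G M : Type*} [Finite G] (I : G → M → Prop) (r : G → G → Prop)
    (hirr : ∀ a, ¬ r a a) (htrans : ∀ a b c, r a b → r b c → r a c)
    (hmod : ∀ g0 g1 g2 : G, ¬ r g0 g1 → ¬ r g1 g0 → r g2 g0 → r g2 g1)
    (φ ψ γ : CAttr M) (h1 : satD I r φ ψ) (h2 : ¬ satD I r φ (CAttr.neg γ)) :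
    satD I r (CAttr.and φ γ) ψ := by
  -- extract a minimal element x of extent φ that lies in extent γ
  rw [satD, Set.not_subset] at h2
  obtain ⟨x, hxmin, hxγ⟩ := h2
  simp only [extent, Set.mem_compl_iff, not_not] at hxγ
  obtain ⟨hxP, hxnolow⟩ := hxmin
  intro y hy
  obtain ⟨⟨hyP, hyγ⟩, hynolow⟩ := hy
  apply h1
  refine ⟨hyP, ?_⟩
  rintro ⟨z, hzP, hzy⟩
  -- x and y are incomparable
  have hxy : ¬ r x y := fun h => hynolow ⟨x, ⟨hxP, hxγ⟩, h⟩
  have hyx : ¬ r y x := fun h => hxnolow ⟨y, hyP, h⟩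
  exact hxnolow ⟨z, hzP, hmod y x z hyx hxy hzy⟩
end

section
/- If Δ is a finite set of defeasible conditionals and (G, M, I) is a Δ-valid formal context, then the ranked context R_OR produced by the ObjectRank algorithm satisfies every conditional in Δ. -/
/-- An object classically satisfies the materialisation `φ → ψ` of a conditional. -/
def matSat {G M : Type*} (I : G → M → Prop) (g : G) (c : CAttr M × CAttr M) : Prop :=
  g ∈ extent I c.1 → g ∈ extent I c.2

/-- `Δ`-validity of a formal context. -/
def DeltaValid {G M : Type*} (I : G → M → Prop) (Δ : Set (CAttr M × CAttr M)) : Prop :=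
  ∀ Δi ⊆ Δ, Δi.Nonempty →
    ∃ g : G, (∀ c ∈ Δi, matSat I g c) ∧ ∃ c ∈ Δi, g ∈ extent I c.1

/-- State of the `ObjectRank` algorithm at iteration `n`: the remaining
conditionals under consideration and the remaining (not yet ranked) objects. -/
def orState {G M : Type*} (I : G → M → Prop) (Δ : Set (CAttr M × CAttr M)) :
    ℕ → Set (CAttr M × CAttr M) × Set G
  | 0 => (Δ, Set.univ)
  | n + 1 =>
      let D := (orState I Δ n).1
      let Rem := (orState I Δ n).2
      let Rank := {g ∈ Rem | ∀ c ∈ D, matSat I g c}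
      (D \ {c ∈ D | ∃ g ∈ Rank, g ∈ extent I c.1}, Rem \ Rank)

/-- The objects assigned rank `n` by `ObjectRank`. -/
def orRank {G M : Type*} (I : G → M → Prop) (Δ : Set (CAttr M × CAttr M)) (n : ℕ) :
    Set G :=
  {g ∈ (orState I Δ n).2 | ∀ c ∈ (orState I Δ n).1, matSat I g c}

/-- The ranking function produced by `ObjectRank`. -/
noncomputable def objectRank {G M : Type*} (I : G → M → Prop)
    (Δ : Set (CAttr M × CAttr M)) (g : G) : ℕ :=
  sInf {n : ℕ | g ∈ orRank I Δ n}

/-- Satisfaction of a defeasible conditional in the ranked context induced by a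
ranking function `R` (preference `g ≺ h` iff `R g < R h`). -/
def rankSat {G M : Type*} (I : G → M → Prop) (R : G → ℕ) (c : CAttr M × CAttr M) :
    Prop :=
  mins (fun a b => R a < R b) (extent I c.1) ⊆ extent I c.2

/-- Convexity of a ranking function: no empty rank below an occupied rank. -/
def RankConvex {G : Type*} (R : G → ℕ) : Prop :=
  ∀ i : ℕ, (∃ g, R g = i) → ∀ j ≤ i, ∃ h, R h = j

section Aux

variable {G M : Type*} (I : G → M → Prop) (Δ : Set (CAttr M × CAttr M))

lemma orState_succ_fst (n : ℕ) :
    (orState I Δ (n+1)).1 =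
      (orState I Δ n).1 \
        {c ∈ (orState I Δ n).1 | ∃ g ∈ orRank I Δ n, g ∈ extent I c.1} := rfl

lemma orState_succ_snd (n : ℕ) :
    (orState I Δ (n+1)).2 = (orState I Δ n).2 \ orRank I Δ n := rfl

lemma D_anti : ∀ {m n : ℕ}, m ≤ n → (orState I Δ n).1 ⊆ (orState I Δ m).1 := by
  intro m n h
  induction n, h using Nat.le_induction with
  | base => exact subset_rfl
  | succ n hmn ih =>
    refine subset_trans ?_ ih
    rw [orState_succ_fst]
    exact Set.diff_subset

lemma Rem_anti : ∀ {m n : ℕ}, m ≤ n → (orState I Δ n).2 ⊆ (orState I Δ m).2 := by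
  intro m n h
  induction n, h using Nat.le_induction with
  | base => exact subset_rfl
  | succ n hmn ih =>
    refine subset_trans ?_ ih
    rw [orState_succ_snd]
    exact Set.diff_subset

lemma D_subset_delta (n : ℕ) : (orState I Δ n).1 ⊆ Δ := D_anti I Δ (Nat.zero_le n)

lemma removed_of_rank {c : CAttr M × CAttr M} {g : G} {k : ℕ}
    (hc : c ∈ (orState I Δ k).1) (hg : g ∈ orRank I Δ k)
    (ha : g ∈ extent I c.1) : c ∉ (orState I Δ (k+1)).1 := by
  rw [orState_succ_fst]
  intro h
  exact h.2 ⟨hc, g, hg, ha⟩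

lemma not_rem {g : G} : ∀ {n : ℕ}, g ∉ (orState I Δ n).2 →
    ∃ k < n, g ∈ orRank I Δ k := by
  intro n
  induction n with
  | zero => intro h; exact absurd (Set.mem_univ g) h
  | succ n ih =>
    intro h
    rw [orState_succ_snd] at h
    by_cases hrem : g ∈ (orState I Δ n).2
    · refine ⟨n, Nat.lt_succ_self n, ?_⟩
      by_contra hrk
      exact h ⟨hrem, fun hrk' => hrk hrk'⟩
    · obtain ⟨k, hk, hgk⟩ := ih hrem
      exact ⟨k, Nat.lt_succ_of_lt hk, hgk⟩

lemma step_removes (hvalid : DeltaValid I Δ) {n : ℕ}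
    (hne : (orState I Δ n).1.Nonempty) :
    ∃ c, c ∈ (orState I Δ n).1 ∧ c ∉ (orState I Δ (n+1)).1 := by
  obtain ⟨g, hsat, c, hc, hant⟩ :=
    hvalid (orState I Δ n).1 (D_subset_delta I Δ n) hne
  have hgrem : g ∈ (orState I Δ n).2 := by
    by_contra h
    obtain ⟨k, hk, hgk⟩ := not_rem I Δ h
    have hck : c ∈ (orState I Δ k).1 := D_anti I Δ (Nat.le_of_lt hk) hc
    have hck1 : c ∈ (orState I Δ (k+1)).1 := D_anti I Δ hk hc
    exact removed_of_rank I Δ hck hgk hant hck1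
  have hgr : g ∈ orRank I Δ n := ⟨hgrem, hsat⟩
  exact ⟨c, hc, removed_of_rank I Δ hc hgr hant⟩

lemma terminates (hfin : Δ.Finite) (hvalid : DeltaValid I Δ) :
    ∃ N, (orState I Δ N).1 = ∅ := by
  have hDfin : ∀ n, ((orState I Δ n).1).Finite :=
    fun n => hfin.subset (D_subset_delta I Δ n)
  suffices h : ∀ k n, ((orState I Δ n).1).ncard ≤ k → ∃ N, (orState I Δ N).1 = ∅ by
    exact h ((orState I Δ 0).1).ncard 0 le_rfl
  intro k
  induction k with
  | zero =>
    intro n hn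
    exact ⟨n, (Set.ncard_eq_zero (hDfin n)).mp (Nat.le_zero.mp hn)⟩
  | succ k ih =>
    intro n hn
    by_cases h : (orState I Δ n).1 = ∅
    · exact ⟨n, h⟩
    · obtain ⟨c, hc, hc'⟩ := step_removes I Δ hvalid (Set.nonempty_iff_ne_empty.mpr h)
      have hss : (orState I Δ (n+1)).1 ⊂ (orState I Δ n).1 :=
        ⟨D_anti I Δ (Nat.le_succ n), fun hsub => hc' (hsub hc)⟩
      have := Set.ncard_lt_ncard hss (hDfin n)
      exact ih (n+1) (by omega)

lemma total (hfin : Δ.Finite) (hvalid : DeltaValid I Δ) (g : G) :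
    ∃ k, g ∈ orRank I Δ k := by
  obtain ⟨N, hN⟩ := terminates I Δ hfin hvalid
  by_cases h : g ∈ (orState I Δ N).2
  · exact ⟨N, h, fun c hc => absurd hc (by rw [hN]; exact Set.notMem_empty c)⟩
  · obtain ⟨k, _, hgk⟩ := not_rem I Δ h
    exact ⟨k, hgk⟩

lemma rank_eq {g : G} {k : ℕ} (hgk : g ∈ orRank I Δ k) :
    objectRank I Δ g = k := by
  have hmem : k ∈ {n : ℕ | g ∈ orRank I Δ n} := hgk
  have hnot : ∀ j < k, g ∉ orRank I Δ j := by
    intro j hj hgj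
    have : g ∈ (orState I Δ (j+1)).2 := Rem_anti I Δ hj hgk.1
    rw [orState_succ_snd] at this
    exact this.2 hgj
  refine le_antisymm (Nat.sInf_le hmem) ?_
  by_contra h
  push_neg at h
  exact hnot _ h (Nat.sInf_mem ⟨k, hmem⟩)

lemma exists_removal_step {c : CAttr M × CAttr M} :
    ∀ {k : ℕ}, c ∈ Δ → c ∉ (orState I Δ k).1 →
      ∃ j < k, c ∈ (orState I Δ j).1 ∧ c ∉ (orState I Δ (j+1)).1 := by
  intro k
  induction k with
  | zero => intro hc h; exact absurd hc h
  | succ k ih =>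
    intro hc h
    by_cases hk : c ∈ (orState I Δ k).1
    · exact ⟨k, Nat.lt_succ_self k, hk, h⟩
    · obtain ⟨j, hj, hj'⟩ := ih hc hk
      exact ⟨j, Nat.lt_succ_of_lt hj, hj'⟩

end Aux

/-- The ranked context derived from `ObjectRank` satisfies `Δ`. -/
theorem objectRank_satisfies_delta {G M : Type*} [Finite G] (I : G → M → Prop)
    (Δ : Set (CAttr M × CAttr M)) (hfin : Δ.Finite) (hvalid : DeltaValid I Δ) :
    ∀ c ∈ Δ, rankSat I (objectRank I Δ) c := by
  intro c hc g hg
  obtain ⟨hgant, hmin⟩ := hg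
  obtain ⟨k, hgk⟩ := total I Δ hfin hvalid g
  have hRg : objectRank I Δ g = k := rank_eq I Δ hgk
  by_cases hcD : c ∈ (orState I Δ k).1
  · exact hgk.2 c hcD hgant
  · obtain ⟨j, hj, hcj, hcj'⟩ := exists_removal_step I Δ hc hcD
    rw [orState_succ_fst] at hcj'
    have : ∃ h ∈ orRank I Δ j, h ∈ extent I c.1 := by
      by_contra habs
      exact hcj' ⟨hcj, fun hS => habs hS.2⟩
    obtain ⟨h, hhj, hhant⟩ := this
    exfalso
    apply hmin
    refine ⟨h, hhant, ?_⟩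
    show objectRank I Δ h < objectRank I Δ g
    rw [rank_eq I Δ hhj, hRg]
    exact hj
end

section
/- Let Δ be a finite set of defeasible conditionals, (G, M, I) a Δ-valid formal context, and R_OR the ranking function produced by ObjectRank. Then R_OR is a ⪯-minimal element of the set of all ranking functions on G whose induced ranked contexts satisfy Δ, where R1 ⪯ R2 iff R1(g) ≤ R2(g) for all g ∈ G. -/

lemma orState_fst_antitone {G M : Type*} (I : G → M → Prop)
    (Δ : Set (CAttr M × CAttr M)) {m n : ℕ} (h : m ≤ n) :
    (orState I Δ n).1 ⊆ (orState I Δ m).1 := by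
  induction n with
  | zero => simp_all
  | succ n ih =>
    rcases Nat.lt_or_ge m (n+1) with hm | hm
    · intro c hc
      exact ih (Nat.lt_succ_iff.mp hm) hc.1
    · have : m = n + 1 := le_antisymm h hm
      subst this; exact fun _ h => h

lemma orState_snd_antitone {G M : Type*} (I : G → M → Prop)
    (Δ : Set (CAttr M × CAttr M)) {m n : ℕ} (h : m ≤ n) :
    (orState I Δ n).2 ⊆ (orState I Δ m).2 := by
  induction n with
  | zero => simp_all
  | succ n ih =>
    rcases Nat.lt_or_ge m (n+1) with hm | hm
    · intro g hg
      exact ih (Nat.lt_succ_iff.mp hm) hg.1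
    · have : m = n + 1 := le_antisymm h hm
      subst this; exact fun _ h => h

lemma orState_fst_subset {G M : Type*} (I : G → M → Prop)
    (Δ : Set (CAttr M × CAttr M)) (n : ℕ) :
    (orState I Δ n).1 ⊆ Δ :=
  orState_fst_antitone I Δ (Nat.zero_le n)

lemma ranked_of_not_rem {G M : Type*} (I : G → M → Prop)
    (Δ : Set (CAttr M × CAttr M)) :
    ∀ k (h : G), h ∉ (orState I Δ (k+1)).2 → ∃ m ≤ k, h ∈ orRank I Δ m := by
  intro k
  induction k with
  | zero =>
    intro h hh
    refine ⟨0, le_refl 0, ?_⟩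
    by_contra hno
    exact hh ⟨Set.mem_univ h, fun hr => hno hr⟩
  | succ k ih =>
    intro h hh
    by_cases hrem : h ∈ (orState I Δ (k+1)).2
    · refine ⟨k+1, le_refl _, ?_⟩
      by_contra hno
      exact hh ⟨hrem, fun hr => hno hr⟩
    · obtain ⟨m, hm, hmem⟩ := ih h hrem
      exact ⟨m, Nat.le_succ_of_le hm, hmem⟩

lemma not_min_of_viol {G M : Type*} {I : G → M → Prop} {R : G → ℕ}
    {c : CAttr M × CAttr M} (hsat : rankSat I R c) {h : G}
    (h1 : h ∈ extent I c.1) (h2 : h ∉ extent I c.2) :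
    ∃ h' ∈ extent I c.1, R h' < R h := by
  by_contra hno
  exact h2 (hsat ⟨h1, hno⟩)

lemma rem_lt_rank {G M : Type*} (I : G → M → Prop)
    (Δ : Set (CAttr M × CAttr M)) (R : G → ℕ) (hsat : ∀ c ∈ Δ, rankSat I R c) :
    ∀ k (h : G), h ∈ (orState I Δ (k+1)).2 → k < R h := by
  intro k
  induction k with
  | zero =>
    intro h hh
    have hnr : ¬ (∀ c ∈ (orState I Δ 0).1, matSat I h c) := by
      intro hall
      exact hh.2 ⟨Set.mem_univ h, hall⟩
    push_neg at hnr
    obtain ⟨c, hcD, hviol⟩ := hnr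
    rw [matSat, Classical.not_imp] at hviol
    obtain ⟨h', _, hlt⟩ :=
      not_min_of_viol (hsat c (orState_fst_subset I Δ 0 hcD)) hviol.1 hviol.2
    exact Nat.zero_lt_of_lt hlt
  | succ k ih =>
    intro h hh
    have hrem : h ∈ (orState I Δ (k+1)).2 := hh.1
    have hk : k < R h := ih h hrem
    -- h is not in Rank_{k+1}: some c ∈ D_{k+1} is violated by h
    have hnr : ¬ (∀ c ∈ (orState I Δ (k+1)).1, matSat I h c) := by
      intro hall
      exact hh.2 ⟨hrem, hall⟩
    push_neg at hnr
    obtain ⟨c, hcD, hviol⟩ := hnr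
    rw [matSat, Classical.not_imp] at hviol
    obtain ⟨h', hh', hlt⟩ :=
      not_min_of_viol (hsat c (orState_fst_subset I Δ (k+1) hcD)) hviol.1 hviol.2
    -- suppose R h = k+1; then R h' ≤ k, so h' was ranked at some m ≤ k
    rcases Nat.lt_or_ge (k+1) (R h) with hgt | hle
    · exact hgt
    · exfalso
      have hRh : R h = k + 1 := le_antisymm hle hk
      have hRh' : ¬ (k < R h') := by omega
      have hnrem : h' ∉ (orState I Δ (k+1)).2 := fun hmem => hRh' (ih h' hmem)
      obtain ⟨m, hm, hmem⟩ := ranked_of_not_rem I Δ k h' hnrem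
      -- but then c is removed at stage m+1, contradicting c ∈ D_{k+1}
      have hcDm1 : c ∈ (orState I Δ (m+1)).1 :=
        orState_fst_antitone I Δ (Nat.succ_le_succ hm) hcD
      exact hcDm1.2 ⟨hcDm1.1, h', hmem, hh'⟩


/-- The `ObjectRank` ranking is `⪯`-minimal among convex ranking functions whose
induced ranked contexts satisfy `Δ` (where `R1 ⪯ R2` iff `R1 g ≤ R2 g` for all `g`). -/
theorem objectRank_minimal {G M : Type*} [Finite G] (I : G → M → Prop)
    (Δ : Set (CAttr M × CAttr M)) (hfin : Δ.Finite) (hvalid : DeltaValid I Δ) :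
    ∀ R : G → ℕ, RankConvex R → (∀ c ∈ Δ, rankSat I R c) →
      (∀ g, R g ≤ objectRank I Δ g) → ∀ g, objectRank I Δ g ≤ R g := by
  intro R _ hsat _ g
  rcases Set.eq_empty_or_nonempty {n : ℕ | g ∈ orRank I Δ n} with hS | ⟨n, hn⟩
  · simp [objectRank, hS]
  · refine le_trans (Nat.sInf_le hn) ?_
    cases n with
    | zero => exact Nat.zero_le _
    | succ n => exact rem_lt_rank I Δ R hsat n g hn.1
end
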